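/- arXiv:2111.13542 — 6 statements merged into one kernel-verified Lean document; each statement's English description precedes it below -/
import Mathlib

section
/- Let 0 → A → E → B → 0 be a split extension of groups with action on themselves with section j, with derived actions b·a = j(b)+a-j(b), b^a = j(b)^a - j(b), a^b = a^{j(b)}. Then (b·a)^{a'} + b^{a'} = b^{a'} + b·(a^{a'}) for all a, a' ∈ A, b ∈ B. -/
/-!
Transported along the injective morphism `i`, both sides become expressions in `E` built
from `x = j b`, `y = i a`, `z = i a'`. Since `(-)^z` is an additive endomorphism of `E`, it
commutes with conjugation by `x`, and both sides reduce to `x^z + y^z - x`.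
-/

/-- A group with action on itself: a (not necessarily abelian) additive group `G`
with a map `act g h = g^h` satisfying `g^(h+h') = (g^h)^{h'}`, `g^0 = g`,
`(g+g')^h = g^h + g'^h`. -/
class Gwa (G : Type*) extends AddGroup G where
  act : G → G → G
  act_add : ∀ g h h' : G, act g (h + h') = act (act g h) h'
  act_zero : ∀ g : G, act g 0 = g
  add_act : ∀ g g' h : G, act (g + g') h = act g h + act g' h

open Gwa

/-- Morphisms of groups with action on themselves. -/
def IsGwaHom {G H : Type*} [Gwa G] [Gwa H] (f : G → H) : Prop :=
  (∀ a b : G, f (a + b) = f a + f b) ∧ ∀ a b : G, f (act a b) = act (f a) (f b)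

namespace Gwa

variable {G : Type*} [Gwa G]

lemma zero_act (h : G) : act (0 : G) h = 0 := by
  have h0 := add_act (0 : G) 0 h
  rw [add_zero] at h0
  exact left_eq_add.mp h0

lemma neg_act (g h : G) : act (-g) h = -act g h := by
  have h0 := add_act (-g) g h
  rw [neg_add_cancel, zero_act] at h0
  exact eq_neg_of_add_eq_zero_left h0.symm

lemma sub_act (g g' h : G) : act (g - g') h = act g h - act g' h := by
  rw [sub_eq_add_neg, add_act, neg_act, sub_eq_add_neg]

lemma conj_act (x y z : G) : act (x + y - x) z = act x z + act y z - act x z := by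
  rw [sub_act, add_act]

lemma conj_act_add_act_sub (x y z : G) :
    act (x + y - x) z + (act x z - x) = act x z - x + (x + act y z - x) := by
  rw [conj_act]
  simp only [sub_eq_add_neg, add_assoc, neg_add_cancel_left]

end Gwa

theorem cond3A_general {A E B : Type*} [Gwa A] [Gwa E] [Gwa B]
    (i : A → E) (j : B → E)
    (hi : IsGwaHom i)
    (hinj : Function.Injective i)
    (dot : B → A → A) (astB : B → A → A)
    (hdot : ∀ (b : B) (a : A), i (dot b a) = j b + i a - j b)
    (hast : ∀ (b : B) (a : A), i (astB b a) = act (j b) (i a) - j b) :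
    ∀ (b : B) (a a' : A), act (dot b a) a' + astB b a' = astB b a' + dot b (act a a') := by
  intro b a a'
  apply hinj
  rw [hi.1, hi.1, hi.2, hast, hdot, hdot, hi.2]
  exact conj_act_add_act_sub (j b) (i a) (i a')

theorem cond3A {A E B : Type*} [Gwa A] [Gwa E] [Gwa B]
    (i : A → E) (p : E → B) (j : B → E)
    (hi : IsGwaHom i) (hp : IsGwaHom p) (hj : IsGwaHom j)
    (hinj : Function.Injective i) (hsurj : Function.Surjective p)
    (hker : ∀ e : E, p e = 0 ↔ ∃ a : A, i a = e)
    (hpj : ∀ b : B, p (j b) = b)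
    (dot : B → A → A) (astB : B → A → A) (actA : A → B → A)
    (hdot : ∀ (b : B) (a : A), i (dot b a) = j b + i a - j b)
    (hast : ∀ (b : B) (a : A), i (astB b a) = act (j b) (i a) - j b)
    (hactA : ∀ (a : A) (b : B), i (actA a b) = act (i a) (j b)) :
    ∀ (b : B) (a a' : A), act (dot b a) a' + astB b a' = astB b a' + dot b (act a a') :=
  cond3A_general i j hi hinj dot astB hdot hast
end

section
/- Let 0 → A → E → B → 0 be a split extension of groups with action on themselves with section j, with derived actions b·a = j(b)+a-j(b), b^a = j(b)^a - j(b), a^b = a^{j(b)}. Then (a^{(b·a')})^b = (a^b)^{a'} for all a, a' ∈ A, b ∈ B. -/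
open Gwa

namespace Gwa

variable {G : Type*} [Gwa G]

theorem act_act_conj (g h k : G) : act (act g (h + k - h)) h = act (act g h) k := by
  rw [← act_add, ← act_add, sub_add_cancel]

end Gwa

theorem cond3B_general {A E B : Type*} [Gwa A] [Gwa E] [Gwa B]
    (i : A → E) (j : B → E)
    (hi : IsGwaHom i)
    (hinj : Function.Injective i)
    (dot : B → A → A) (actA : A → B → A)
    (hdot : ∀ (b : B) (a : A), i (dot b a) = j b + i a - j b)
    (hactA : ∀ (a : A) (b : B), i (actA a b) = act (i a) (j b)) :
    ∀ (a a' : A) (b : B), actA (act a (dot b a')) b = act (actA a b) a' := by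
  intro a a' b
  apply hinj
  rw [hactA, hi.2, hi.2, hactA, hdot]
  exact act_act_conj (i a) (j b) (i a')

theorem cond3B {A E B : Type*} [Gwa A] [Gwa E] [Gwa B]
    (i : A → E) (p : E → B) (j : B → E)
    (hi : IsGwaHom i) (hp : IsGwaHom p) (hj : IsGwaHom j)
    (hinj : Function.Injective i) (hsurj : Function.Surjective p)
    (hker : ∀ e : E, p e = 0 ↔ ∃ a : A, i a = e)
    (hpj : ∀ b : B, p (j b) = b)
    (dot : B → A → A) (astB : B → A → A) (actA : A → B → A)
    (hdot : ∀ (b : B) (a : A), i (dot b a) = j b + i a - j b)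
    (hast : ∀ (b : B) (a : A), i (astB b a) = act (j b) (i a) - j b)
    (hactA : ∀ (a : A) (b : B), i (actA a b) = act (i a) (j b)) :
    ∀ (a a' : A) (b : B), actA (act a (dot b a')) b = act (actA a b) a' :=
  cond3B_general i j hi hinj dot actA hdot hactA
end

section
/- Let A and B be groups with action on themselves and suppose B acts on A by a triple (·, a^b, b^a) satisfying the derived-action conditions (group action laws for ·, conditions (1_A)–(4_A), (1_B)–(4_B), and a^{0_B} = a). Define on B × A the operations (b,a)+(b',a') = (b+b', a + b·a') and (b,a)^{(b',a')} = (b^{b'}, (a^{a'})^{b'} + (b^{a'})^{b'}). Then B ⋉ A := (B × A, +, ^) is a group with action on itself. -/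
open Gwa

/-- A "group with action on itself" structure given by explicit operations. -/
structure GwaStruct (G : Type*) where
  add : G → G → G
  zero : G
  neg : G → G
  act : G → G → G
  add_assoc : ∀ a b c : G, add (add a b) c = add a (add b c)
  zero_add : ∀ a : G, add zero a = a
  add_zero : ∀ a : G, add a zero = a
  neg_add : ∀ a : G, add (neg a) a = zero
  act_add : ∀ g h h' : G, act g (add h h') = act (act g h) h'
  act_zero : ∀ g : G, act g zero = g
  add_act : ∀ g g' h : G, act (add g g') h = add (act g h) (act g' h)

theorem semidirect_is_gwa {A B : Type*} [Gwa A] [Gwa B]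
    (dot : B → A → A) (astB : B → A → A) (actA : A → B → A)
    (hdot1 : ∀ (b : B) (a a' : A), dot b (a + a') = dot b a + dot b a')
    (hdot2 : ∀ (b b' : B) (a : A), dot (b + b') a = dot b (dot b' a))
    (hdot3 : ∀ a : A, dot 0 a = a)
    (h1A : ∀ (a a' : A) (b : B), actA (a + a') b = actA a b + actA a' b)
    (h2A : ∀ (b b' : B) (a : A), astB (b + b') a = astB b a + dot b (astB b' a))
    (h3A : ∀ (b : B) (a a' : A), act (dot b a) a' + astB b a' = astB b a' + dot b (act a a'))
    (h4A : ∀ (b b' : B) (a : A), actA (dot b a) b' = dot (act b b') (actA a b'))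
    (h1B : ∀ (b : B) (a a' : A), astB b (a + a') = act (astB b a) a' + astB b a')
    (h2B : ∀ (a : A) (b b' : B), actA a (b + b') = actA (actA a b) b')
    (h3B : ∀ (a a' : A) (b : B), actA (act a (dot b a')) b = act (actA a b) a')
    (h4B : ∀ (b b' : B) (a : A), actA (astB b (dot b' a)) b' = astB (act b b') a)
    (h0 : ∀ a : A, actA a 0 = a) :
    ∃ s : GwaStruct (B × A),
      (∀ p q : B × A, s.add p q = (p.1 + q.1, p.2 + dot p.1 q.2)) ∧
      s.zero = (0, 0) ∧
      (∀ p q : B × A,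
        s.act p q = (act p.1 q.1, actA (act p.2 q.2) q.1 + actA (astB p.1 q.2) q.1)) := by
  have dot_zero : ∀ b : B, dot b 0 = 0 := by
    intro b
    have h := hdot1 b 0 0
    rw [add_zero] at h
    exact (right_eq_add.mp h)
  have astB_zero : ∀ b : B, astB b 0 = 0 := by
    intro b
    have h := h1B b 0 0
    rw [add_zero, Gwa.act_zero] at h
    exact (right_eq_add.mp h)
  refine ⟨{
    add := fun p q => (p.1 + q.1, p.2 + dot p.1 q.2)
    zero := (0, 0)
    neg := fun p => (-p.1, dot (-p.1) (-p.2))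
    act := fun p q => (act p.1 q.1, actA (act p.2 q.2) q.1 + actA (astB p.1 q.2) q.1)
    add_assoc := ?_
    zero_add := ?_
    add_zero := ?_
    neg_add := ?_
    act_add := ?_
    act_zero := ?_
    add_act := ?_ }, fun p q => rfl, rfl, fun p q => rfl⟩
  · rintro ⟨b, a⟩ ⟨b', a'⟩ ⟨b'', a''⟩
    simp only [Prod.mk.injEq, hdot2, hdot1, add_assoc, and_self]
  · rintro ⟨b, a⟩
    simp [hdot3]
  · rintro ⟨b, a⟩
    simp [dot_zero]
  · rintro ⟨b, a⟩
    simp only [Prod.mk.injEq, neg_add_cancel, true_and]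
    rw [← hdot1, neg_add_cancel, dot_zero]
  · rintro ⟨b, a⟩ ⟨b', a'⟩ ⟨b'', a''⟩
    refine Prod.ext (Gwa.act_add _ _ _) ?_
    show actA (act a (a' + dot b' a'')) (b' + b'') + actA (astB b (a' + dot b' a'')) (b' + b'')
        = actA (act (actA (act a a') b' + actA (astB b a') b') a'') b''
          + actA (astB (act b b') a'') b''
    calc actA (act a (a' + dot b' a'')) (b' + b'') + actA (astB b (a' + dot b' a'')) (b' + b'')
        = actA (act (actA (act a a') b') a'') b''
          + actA (actA (act (astB b a') (dot b' a'') + astB b (dot b' a'')) b') b'' := by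
          rw [Gwa.act_add, h2B, h3B, h1B, h2B]
      _ = actA (act (actA (act a a') b') a'') b''
          + (actA (act (actA (astB b a') b') a'') b'' + actA (astB (act b b') a'') b'') := by
          rw [h1A, h3B, h4B, h1A]
      _ = actA (act (actA (act a a') b' + actA (astB b a') b') a'') b''
          + actA (astB (act b b') a'') b'' := by
          rw [Gwa.add_act, h1A, add_assoc]
  · rintro ⟨b, a⟩
    simp [Gwa.act_zero, h0, astB_zero]
  · rintro ⟨b, a⟩ ⟨b', a'⟩ ⟨b'', a''⟩
    refine Prod.ext (Gwa.add_act _ _ _) ?_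
    show actA (act (a + dot b a') a'') b'' + actA (astB (b + b') a'') b''
        = (actA (act a a'') b'' + actA (astB b a'') b'')
          + dot (act b b'') (actA (act a' a'') b'' + actA (astB b' a'') b'')
    have key : actA (act (dot b a') a'') b'' + actA (astB b a'') b''
        = actA (astB b a'') b'' + actA (dot b (act a' a'')) b'' := by
      rw [← h1A, ← h1A, h3A]
    calc actA (act (a + dot b a') a'') b'' + actA (astB (b + b') a'') b''
        = (actA (act a a'') b'' + actA (act (dot b a') a'') b'')
          + (actA (astB b a'') b'' + actA (dot b (astB b' a'')) b'') := by
          rw [Gwa.add_act, h2A, h1A, h1A]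
      _ = actA (act a a'') b''
          + (actA (act (dot b a') a'') b'' + actA (astB b a'') b'')
          + actA (dot b (astB b' a'')) b'' := by
          simp only [add_assoc]
      _ = actA (act a a'') b''
          + (actA (astB b a'') b'' + actA (dot b (act a' a'')) b'')
          + actA (dot b (astB b' a'')) b'' := by rw [key]
      _ = (actA (act a a'') b'' + actA (astB b a'') b'')
          + dot (act b b'') (actA (act a' a'') b'' + actA (astB b' a'') b'') := by
          rw [h4A, h4A, hdot1]
          simp only [add_assoc]
end

section
/- Let 0 → A → E → B → 0 be a split extension in the category of reduced groups with action on themselves, with section j and derived actions b·a = j(b)+a-j(b), b^a = j(b)^a - j(b), a^b = a^{j(b)}. Then for all a, a' ∈ A and b, b' ∈ B: a^{(b^{a'})} = a, b^{(b'^a)} = 0, and b^{(a^{b'})} = b^a. -/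
open Gwa

/-- A reduced group with action on itself. -/
class RGwa (G : Type*) extends Gwa G where
  act_comm : ∀ x y z : G, y ≠ 0 → act x y + z = z + act x y
  act_act : ∀ x y z : G, act x (act y z) = act x y

/-! Pulling each identity back along the injective `i`, the derived action `b^a` becomes
`j(b)^a - j(b)` in `E`, and in a reduced group `x^(y^z - y) = (x^y)^(-y) = x`. -/

theorem IsGwaHom.map_zero {G H : Type*} [Gwa G] [Gwa H] {f : G → H} (hf : IsGwaHom f) :
    f 0 = 0 :=
  (AddMonoidHom.mk' f hf.1).map_zero

theorem RGwa.act_act_sub_self {G : Type*} [RGwa G] (x y z : G) : act x (act y z - y) = x := by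
  rw [sub_eq_add_neg, act_add, RGwa.act_act, ← act_add, add_neg_cancel, act_zero]

theorem reduced_derived_action_conditions_general {A E B : Type*} [RGwa A] [RGwa E] [RGwa B]
    (i : A → E) (j : B → E)
    (hi : IsGwaHom i)
    (hinj : Function.Injective i)
    (astB : B → A → A) (actA : A → B → A)
    (hast : ∀ (b : B) (a : A), i (astB b a) = act (j b) (i a) - j b)
    (hactA : ∀ (a : A) (b : B), i (actA a b) = act (i a) (j b)) :
    ∀ (a a' : A) (b b' : B),
      act a (astB b a') = a ∧
      astB b (astB b' a) = 0 ∧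
      astB b (actA a b') = astB b a := by
  intro a a' b b'
  refine ⟨hinj ?_, hinj ?_, hinj ?_⟩
  · rw [hi.2, hast, RGwa.act_act_sub_self]
  · rw [hast, hast, RGwa.act_act_sub_self, sub_self, hi.map_zero]
  · rw [hast, hast, hactA, RGwa.act_act]

theorem reduced_derived_action_conditions {A E B : Type*} [RGwa A] [RGwa E] [RGwa B]
    (i : A → E) (p : E → B) (j : B → E)
    (hi : IsGwaHom i) (hp : IsGwaHom p) (hj : IsGwaHom j)
    (hinj : Function.Injective i) (hsurj : Function.Surjective p)
    (hker : ∀ e : E, p e = 0 ↔ ∃ a : A, i a = e)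
    (hpj : ∀ b : B, p (j b) = b)
    (dot : B → A → A) (astB : B → A → A) (actA : A → B → A)
    (hdot : ∀ (b : B) (a : A), i (dot b a) = j b + i a - j b)
    (hast : ∀ (b : B) (a : A), i (astB b a) = act (j b) (i a) - j b)
    (hactA : ∀ (a : A) (b : B), i (actA a b) = act (i a) (j b)) :
    ∀ (a a' : A) (b b' : B),
      act a (astB b a') = a ∧
      astB b (astB b' a) = 0 ∧
      astB b (actA a b') = astB b a :=
  reduced_derived_action_conditions_general i j hi hinj astB actA hast hactA
end

section
/- Let A, B be reduced groups with action on themselves, and suppose B acts on A by a triple satisfying the derived-action conditions of groups with action together with the reduced conditions: b·(a^{a'}) = a^{a'}, b·(a^{b'}) = a^{b'}, (b^{b'})·a = a, b^{(a^{a'})} = b^a, a^{(b^{b'})} = a^b, a^b + a' = a' + a^b, a^{(a'^b)} = a^{a'}, a^{(b^{a'})} = a, b^{(b'^a)} = 0, and b^{(a^{b'})} = b^a. Then the semi-direct product B ⋉ A, with (b,a)+(b',a') = (b+b', a+b·a') and (b,a)^{(b',a')} = (b^{b'}, (a^{a'})^{b'} + (b^{a'})^{b'}), is a reduced group with action on itself;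 in particular (b,a)^{(b',a')} + (b'',a'') = (b'',a'') + (b,a)^{(b',a')} whenever (b',a') ≠ (0,0), and (b,a)^{((b',a')^{(b'',a'')})} = (b,a)^{(b',a')}. -/
open Gwa

/-!
In a reduced group with action on itself every element is a value `x = (x^w)^{-w}` of the action at a
nonzero exponent as soon as some `w ≠ 0` exists, so the group is abelian. With commutativity of `A`
and `B` at hand, each axiom of the semi-direct product `B ⋉ A` becomes a rewriting with the
derived-action conditions, and the reduced conditions make every iterated action collapse.
-/

theorem RGwa.add_comm {G : Type*} [RGwa G] (x y : G) : x + y = y + x := by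
  by_cases htriv : ∀ z : G, z = 0
  · rw [htriv x, htriv y]
  · push Not at htriv
    obtain ⟨w, hw⟩ := htriv
    have hx : x = act (act x w) (-w) := by
      rw [← Gwa.act_add, add_neg_cancel, Gwa.act_zero]
    rw [hx]
    exact RGwa.act_comm (act x w) (-w) y (neg_ne_zero.mpr hw)

theorem RGwa.add_add_add_comm {G : Type*} [RGwa G] (a b c d : G) :
    a + b + (c + d) = a + c + (b + d) := by
  rw [add_assoc, add_assoc, ← add_assoc b, RGwa.add_comm b c, add_assoc]

def semidirectAdd {A B : Type*} [Add A] [Add B] (dot : B → A → A) (p q : B × A) : B × A :=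
  (p.1 + q.1, p.2 + dot p.1 q.2)

def semidirectNeg {A B : Type*} [Neg A] [Neg B] (dot : B → A → A) (p : B × A) : B × A :=
  (-p.1, dot (-p.1) (-p.2))

def semidirectAct {A B : Type*} [Gwa A] [Gwa B] (astB : B → A → A) (actA : A → B → A)
    (p q : B × A) : B × A :=
  (act p.1 q.1, actA (act p.2 q.2) q.1 + actA (astB p.1 q.2) q.1)

theorem dot_zero {A B : Type*} [AddGroup A] {dot : B → A → A}
    (dot_add : ∀ (b : B) (a a' : A), dot b (a + a') = dot b a + dot b a') (b : B) :
    dot b 0 = 0 :=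
  (AddMonoidHom.mk' (dot b) (dot_add b)).map_zero

section SemidirectAdd

variable {A B : Type*} [AddGroup A] [AddGroup B] {dot : B → A → A}

theorem semidirectAdd_assoc
    (dot_add : ∀ (b : B) (a a' : A), dot b (a + a') = dot b a + dot b a')
    (add_dot : ∀ (b b' : B) (a : A), dot (b + b') a = dot b (dot b' a))
    (p q r : B × A) :
    semidirectAdd dot (semidirectAdd dot p q) r = semidirectAdd dot p (semidirectAdd dot q r) := by
  simp only [semidirectAdd, add_assoc, dot_add, add_dot]

theorem semidirectAdd_zero_left (zero_dot : ∀ a : A, dot 0 a = a) (p : B × A) :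
    semidirectAdd dot (0, 0) p = p := by
  simp [semidirectAdd, zero_dot]

theorem semidirectAdd_zero_right
    (dot_add : ∀ (b : B) (a a' : A), dot b (a + a') = dot b a + dot b a') (p : B × A) :
    semidirectAdd dot p (0, 0) = p := by
  simp [semidirectAdd, dot_zero dot_add]

theorem semidirectNeg_add
    (dot_add : ∀ (b : B) (a a' : A), dot b (a + a') = dot b a + dot b a') (p : B × A) :
    semidirectAdd dot (semidirectNeg dot p) p = (0, 0) := by
  simp [semidirectAdd, semidirectNeg, ← dot_add, dot_zero dot_add]

end SemidirectAdd

theorem astB_zero {A B : Type*} [Gwa A] {astB : B → A → A}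
    (astB_add : ∀ (b : B) (a a' : A), astB b (a + a') = act (astB b a) a' + astB b a')
    (b : B) : astB b 0 = 0 := by
  have h := astB_add b 0 0
  rwa [add_zero, Gwa.act_zero, left_eq_add] at h

theorem act_dot_eq_act {A B : Type*} [RGwa A] {dot astB : B → A → A}
    (act_dot_add_astB : ∀ (b : B) (a a' : A),
      act (dot b a) a' + astB b a' = astB b a' + dot b (act a a'))
    (dot_act_right : ∀ (b : B) (a a' : A), dot b (act a a') = act a a')
    (b : B) (a x : A) : act (dot b a) x = act a x := by
  have h := act_dot_add_astB b a x
  rwa [dot_act_right, RGwa.add_comm (astB b x), add_left_inj] at h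

theorem actA_dot_eq_actA {A B : Type*} [Gwa B] {dot : B → A → A} {actA : A → B → A}
    (actA_dot : ∀ (b b' : B) (a : A), actA (dot b a) b' = dot (act b b') (actA a b'))
    (dot_act_left : ∀ (b b' : B) (a : A), dot (act b b') a = a)
    (b c : B) (a : A) : actA (dot b a) c = actA a c := by
  rw [actA_dot, dot_act_left]

section SemidirectAct

variable {A B : Type*} {dot astB : B → A → A} {actA : A → B → A}

theorem semidirectAct_zero [Gwa A] [Gwa B]
    (astB_add : ∀ (b : B) (a a' : A), astB b (a + a') = act (astB b a) a' + astB b a')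
    (actA_zero : ∀ a : A, actA a 0 = a) (p : B × A) :
    semidirectAct astB actA p (0, 0) = p := by
  simp [semidirectAct, Gwa.act_zero, astB_zero astB_add, actA_zero]

theorem semidirectAct_add_right [Gwa A] [Gwa B]
    (add_actA : ∀ (a a' : A) (b : B), actA (a + a') b = actA a b + actA a' b)
    (astB_add : ∀ (b : B) (a a' : A), astB b (a + a') = act (astB b a) a' + astB b a')
    (actA_add : ∀ (a : A) (b b' : B), actA a (b + b') = actA (actA a b) b')
    (actA_act_dot : ∀ (a a' : A) (b : B), actA (act a (dot b a')) b = act (actA a b) a')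
    (actA_astB_dot : ∀ (b b' : B) (a : A), actA (astB b (dot b' a)) b' = astB (act b b') a)
    (p q r : B × A) :
    semidirectAct astB actA p (semidirectAdd dot q r) =
      semidirectAct astB actA (semidirectAct astB actA p q) r := by
  simp only [semidirectAct, semidirectAdd, Prod.mk.injEq]
  refine ⟨Gwa.act_add _ _ _, ?_⟩
  rw [Gwa.act_add, actA_add, actA_act_dot, astB_add, add_actA, actA_add, actA_act_dot, actA_add,
    actA_astB_dot, Gwa.add_act, add_actA, add_assoc]

theorem semidirectAct_add_left [RGwa A] [Gwa B]
    (add_actA : ∀ (a a' : A) (b : B), actA (a + a') b = actA a b + actA a' b)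
    (add_astB : ∀ (b b' : B) (a : A), astB (b + b') a = astB b a + dot b (astB b' a))
    (act_dot_add_astB : ∀ (b : B) (a a' : A),
      act (dot b a) a' + astB b a' = astB b a' + dot b (act a a'))
    (actA_dot : ∀ (b b' : B) (a : A), actA (dot b a) b' = dot (act b b') (actA a b'))
    (dot_act_right : ∀ (b : B) (a a' : A), dot b (act a a') = act a a')
    (dot_act_left : ∀ (b b' : B) (a : A), dot (act b b') a = a)
    (p q r : B × A) :
    semidirectAct astB actA (semidirectAdd dot p q) r =
      semidirectAdd dot (semidirectAct astB actA p r) (semidirectAct astB actA q r) := by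
  simp only [semidirectAct, semidirectAdd, Prod.mk.injEq]
  refine ⟨Gwa.add_act _ _ _, ?_⟩
  rw [Gwa.add_act, act_dot_eq_act act_dot_add_astB dot_act_right, add_astB, add_actA, add_actA,
    actA_dot_eq_actA actA_dot dot_act_left, dot_act_left, RGwa.add_add_add_comm]

theorem semidirectAdd_semidirectAct_comm [RGwa A] [RGwa B]
    (dot_add : ∀ (b : B) (a a' : A), dot b (a + a') = dot b a + dot b a')
    (dot_actA : ∀ (b b' : B) (a : A), dot b (actA a b') = actA a b')
    (dot_act_left : ∀ (b b' : B) (a : A), dot (act b b') a = a)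
    (p q r : B × A) :
    semidirectAdd dot (semidirectAct astB actA p q) r =
      semidirectAdd dot r (semidirectAct astB actA p q) := by
  simp only [semidirectAct, semidirectAdd, Prod.mk.injEq]
  refine ⟨RGwa.add_comm _ _, ?_⟩
  rw [dot_act_left, dot_add, dot_actA, dot_actA, RGwa.add_comm]

theorem semidirectAct_semidirectAct [RGwa A] [RGwa B]
    (astB_add : ∀ (b : B) (a a' : A), astB b (a + a') = act (astB b a) a' + astB b a')
    (astB_act : ∀ (b : B) (a a' : A), astB b (act a a') = astB b a)
    (actA_act : ∀ (a : A) (b b' : B), actA a (act b b') = actA a b)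
    (act_actA : ∀ (a a' : A) (b : B), act a (actA a' b) = act a a')
    (act_astB : ∀ (a a' : A) (b : B), act a (astB b a') = a)
    (astB_astB : ∀ (b b' : B) (a : A), astB b (astB b' a) = 0)
    (astB_actA : ∀ (b b' : B) (a : A), astB b (actA a b') = astB b a)
    (p q r : B × A) :
    semidirectAct astB actA p (semidirectAct astB actA q r) = semidirectAct astB actA p q := by
  simp only [semidirectAct, Prod.mk.injEq]
  refine ⟨RGwa.act_act _ _ _, ?_⟩
  simp only [astB_act, actA_act, act_actA, act_astB, astB_astB, astB_actA, astB_add, Gwa.act_add,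
    RGwa.act_act, add_zero]

end SemidirectAct

theorem reduced_semidirect_is_rgwa_general {A B : Type*} [RGwa A] [RGwa B]
        (dot : B → A → A) (astB : B → A → A) (actA : A → B → A)
    (hdot1 : ∀ (b : B) (a a' : A), dot b (a + a') = dot b a + dot b a')
    (hdot2 : ∀ (b b' : B) (a : A), dot (b + b') a = dot b (dot b' a))
    (hdot3 : ∀ a : A, dot 0 a = a)
    (h1A : ∀ (a a' : A) (b : B), actA (a + a') b = actA a b + actA a' b)
    (h2A : ∀ (b b' : B) (a : A), astB (b + b') a = astB b a + dot b (astB b' a))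
    (h3A : ∀ (b : B) (a a' : A), act (dot b a) a' + astB b a' = astB b a' + dot b (act a a'))
    (h4A : ∀ (b b' : B) (a : A), actA (dot b a) b' = dot (act b b') (actA a b'))
    (h1B : ∀ (b : B) (a a' : A), astB b (a + a') = act (astB b a) a' + astB b a')
    (h2B : ∀ (a : A) (b b' : B), actA a (b + b') = actA (actA a b) b')
    (h3B : ∀ (a a' : A) (b : B), actA (act a (dot b a')) b = act (actA a b) a')
    (h4B : ∀ (b b' : B) (a : A), actA (astB b (dot b' a)) b' = astB (act b b') a)
    (h0 : ∀ a : A, actA a 0 = a)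
    (r1 : ∀ (b : B) (a a' : A), dot b (act a a') = act a a')
    (r2 : ∀ (b b' : B) (a : A), dot b (actA a b') = actA a b')
    (r3 : ∀ (b b' : B) (a : A), dot (act b b') a = a)
    (r4 : ∀ (b : B) (a a' : A), astB b (act a a') = astB b a)
    (r5 : ∀ (a : A) (b b' : B), actA a (act b b') = actA a b)
    (r7 : ∀ (a a' : A) (b : B), act a (actA a' b) = act a a')
    (r8 : ∀ (a a' : A) (b : B), act a (astB b a') = a)
    (r9 : ∀ (b b' : B) (a : A), astB b (astB b' a) = 0)
    (r10 : ∀ (b b' : B) (a : A), astB b (actA a b') = astB b a) :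
    ∃ s : GwaStruct (B × A),
      (∀ p q : B × A, s.add p q = (p.1 + q.1, p.2 + dot p.1 q.2)) ∧
      s.zero = (0, 0) ∧
      (∀ p q : B × A,
        s.act p q = (act p.1 q.1, actA (act p.2 q.2) q.1 + actA (astB p.1 q.2) q.1)) ∧
      (∀ p q r : B × A, q ≠ s.zero → s.add (s.act p q) r = s.add r (s.act p q)) ∧
      (∀ p q r : B × A, s.act p (s.act q r) = s.act p q) := by
  refine ⟨{
      add := semidirectAdd dot
      zero := (0, 0)
      neg := semidirectNeg dot
      act := semidirectAct astB actA
      add_assoc := semidirectAdd_assoc hdot1 hdot2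
      zero_add := semidirectAdd_zero_left hdot3
      add_zero := semidirectAdd_zero_right hdot1
      neg_add := semidirectNeg_add hdot1
      act_add := semidirectAct_add_right h1A h1B h2B h3B h4B
      act_zero := semidirectAct_zero h1B h0
      add_act := semidirectAct_add_left h1A h2A h3A h4A r1 r3 },
    fun _ _ => rfl, rfl, fun _ _ => rfl,
    fun p q r _ => semidirectAdd_semidirectAct_comm hdot1 r2 r3 p q r,
    semidirectAct_semidirectAct h1B r4 r5 r7 r8 r9 r10⟩

theorem reduced_semidirect_is_rgwa {A B : Type*} [RGwa A] [RGwa B]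
        (dot : B → A → A) (astB : B → A → A) (actA : A → B → A)
    (hdot1 : ∀ (b : B) (a a' : A), dot b (a + a') = dot b a + dot b a')
    (hdot2 : ∀ (b b' : B) (a : A), dot (b + b') a = dot b (dot b' a))
    (hdot3 : ∀ a : A, dot 0 a = a)
    (h1A : ∀ (a a' : A) (b : B), actA (a + a') b = actA a b + actA a' b)
    (h2A : ∀ (b b' : B) (a : A), astB (b + b') a = astB b a + dot b (astB b' a))
    (h3A : ∀ (b : B) (a a' : A), act (dot b a) a' + astB b a' = astB b a' + dot b (act a a'))
    (h4A : ∀ (b b' : B) (a : A), actA (dot b a) b' = dot (act b b') (actA a b'))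
    (h1B : ∀ (b : B) (a a' : A), astB b (a + a') = act (astB b a) a' + astB b a')
    (h2B : ∀ (a : A) (b b' : B), actA a (b + b') = actA (actA a b) b')
    (h3B : ∀ (a a' : A) (b : B), actA (act a (dot b a')) b = act (actA a b) a')
    (h4B : ∀ (b b' : B) (a : A), actA (astB b (dot b' a)) b' = astB (act b b') a)
    (h0 : ∀ a : A, actA a 0 = a)
    (r1 : ∀ (b : B) (a a' : A), dot b (act a a') = act a a')
    (r2 : ∀ (b b' : B) (a : A), dot b (actA a b') = actA a b')
    (r3 : ∀ (b b' : B) (a : A), dot (act b b') a = a)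
    (r4 : ∀ (b : B) (a a' : A), astB b (act a a') = astB b a)
    (r5 : ∀ (a : A) (b b' : B), actA a (act b b') = actA a b)
    (r6 : ∀ (a a' : A) (b : B), actA a b + a' = a' + actA a b)
    (r7 : ∀ (a a' : A) (b : B), act a (actA a' b) = act a a')
    (r8 : ∀ (a a' : A) (b : B), act a (astB b a') = a)
    (r9 : ∀ (b b' : B) (a : A), astB b (astB b' a) = 0)
    (r10 : ∀ (b b' : B) (a : A), astB b (actA a b') = astB b a) :
    ∃ s : GwaStruct (B × A),
      (∀ p q : B × A, s.add p q = (p.1 + q.1, p.2 + dot p.1 q.2)) ∧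
      s.zero = (0, 0) ∧
      (∀ p q : B × A,
        s.act p q = (act p.1 q.1, actA (act p.2 q.2) q.1 + actA (astB p.1 q.2) q.1)) ∧
      (∀ p q r : B × A, q ≠ s.zero → s.add (s.act p q) r = s.add r (s.act p q)) ∧
      (∀ p q r : B × A, s.act p (s.act q r) = s.act p q) :=
  reduced_semidirect_is_rgwa_general dot astB actA hdot1 hdot2 hdot3 h1A h2A h3A h4A h1B h2B h3B h4B
    h0 r1 r2 r3 r4 r5 r7 r8 r9 r10
end

section
/- Let A be a group with action on itself in which the self-action triple is defined by a·a' = a+a'-a, a'^{▷a} = a'^a, and a^{∘a'} = a^{a'} (without subtracting a). Then in general this triple is NOT a derived action: specifically, there exists a group with action on itself for which condition (2_A): (b+b')^{∘a} = b^{∘a} + b·(b'^{∘a}) fails (equivalently, (1_B) fails). -/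
open Gwa

namespace GwaStruct

variable {G : Type*}

theorem add_left_injective (s : GwaStruct G) (b : G) : Function.Injective (s.add b) := by
  intro x y h
  have := congrArg (s.add (s.neg b)) h
  rwa [← s.add_assoc, ← s.add_assoc, s.neg_add, s.zero_add, s.zero_add] at this

theorem add_neg (s : GwaStruct G) (b : G) : s.add b (s.neg b) = s.zero :=
  calc s.add b (s.neg b)
      = s.add (s.add (s.neg (s.neg b)) (s.neg b)) (s.add b (s.neg b)) := by
        rw [s.neg_add, s.zero_add]
    _ = s.add (s.neg (s.neg b)) (s.add (s.add (s.neg b) b) (s.neg b)) := by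
        simp only [s.add_assoc]
    _ = s.zero := by rw [s.neg_add, s.zero_add, s.neg_add]

/-- At `a = 0` the action drops out of condition (2_A), leaving the commutation of `b` and `b'`. -/
theorem derived_identity_zero_iff (s : GwaStruct G) (b b' : G) :
    s.act (s.add b b') s.zero =
        s.add (s.act b s.zero) (s.add (s.add b (s.act b' s.zero)) (s.neg b)) ↔
      s.add b' b = s.add b b' := by
  rw [s.act_zero, s.act_zero, s.act_zero, (s.add_left_injective b).eq_iff]
  constructor
  · intro h
    conv_lhs => rw [h]
    rw [s.add_assoc, s.neg_add, s.add_zero]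
  · intro h
    rw [← h, s.add_assoc, s.add_neg, s.add_zero]

def conj (G : Type*) [Group G] : GwaStruct G where
  add := (· * ·)
  zero := 1
  neg := (·⁻¹)
  act g h := h⁻¹ * g * h
  add_assoc := mul_assoc
  zero_add := one_mul
  add_zero := mul_one
  neg_add := inv_mul_cancel
  act_add g h h' := by group
  act_zero g := by group
  add_act g g' h := by group

end GwaStruct

theorem unshifted_self_action_not_derived :
    ∃ (G : Type) (s : GwaStruct G) (b b' a : G),
      s.act (s.add b b') a ≠
        s.add (s.act b a) (s.add (s.add b (s.act b' a)) (s.neg b)) :=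
  ⟨Equiv.Perm (Fin 3), GwaStruct.conj _, Equiv.swap 0 1, Equiv.swap 1 2, 1,
    (GwaStruct.derived_identity_zero_iff _ _ _).not.mpr (by decide)⟩
end
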